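/- Let F ⊆ binom([n], r) be intersecting with n sufficiently large, and let 3 ≤ u ≤ r be a real number. If |F| > binom(n-1, r-1) - binom(n-u-1, r-1) + binom(n-u-1, r-u), then d(F) = |F| - Δ(F) < binom(n-u-1, r-u). -/

import Mathlib

open Finset

def FamIntersecting (F : Finset (Finset ℕ)) : Prop :=
  ∀ A ∈ F, ∀ B ∈ F, (A ∩ B).Nonempty

def maxDeg (F : Finset (Finset ℕ)) : ℕ :=
  (F.biUnion id).sup fun x => (F.filter fun E => x ∈ E).card

def IsFlower (α : ℝ) (S : Finset (Finset ℕ)) (Y : Finset ℕ) : Prop :=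
  S.Nonempty ∧ (∀ A ∈ S, Y ⊆ A) ∧ (∀ x, (∀ A ∈ S, x ∈ A) → x ∈ Y) ∧
    ∀ T : Finset ℕ, (T.card : ℝ) ≤ α → ∃ A ∈ S, (A \ Y) ∩ T = ∅

def IsFlowerCore (α : ℝ) (F : Finset (Finset ℕ)) (Y : Finset ℕ) : Prop :=
  Y.Nonempty ∧ ∃ S ⊆ F, IsFlower α S Y

open scoped Classical in
noncomputable def flowerBase (α : ℝ) (F : Finset (Finset ℕ)) : Finset (Finset ℕ) :=
  (F.biUnion Finset.powerset).filter fun B =>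
    (IsFlowerCore α F B ∨ B ∈ F) ∧
    ∀ B', (IsFlowerCore α F B' ∨ B' ∈ F) → B' ⊆ B → B' = B

noncomputable def tau (F : Finset (Finset ℕ)) : ℕ :=
  sInf {k | ∃ T : Finset ℕ, T.card = k ∧ ∀ A ∈ F, (A ∩ T).Nonempty}

/-!
Let `x` be a vertex of maximum degree `Δ` and `D` the members of `F` avoiding `x`, so that
`d(F) = |D|`. If `D` has no common vertex, every member through `x` contains a point of a fixed
member of `D` and then a point of a member of `D` avoiding the first one, so `Δ = O(n^(r-3))`;
as every member of `D` meets a fixed member of `D`, `|F| ≤ (r + 1) Δ < binom(n-2, r-2)`, which is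
too small. If all of `D` passes through a vertex `y`, then `deg y ≤ Δ` gives
`|D| ≤ |F(x, ¬y)|`, and deleting `x` and `y` turns `F(x, ¬y)` and `D` into cross-intersecting
`(r-1)`-uniform families on `n - 2` points, the second one of size at least
`binom(n-u-1, r-u)`. A Hilton–Milner type bound for such pairs, proved by peeling off a common
vertex of the second family while it has one, then bounds `|F|` by the right-hand side.
-/

namespace Nat

lemma choose_le_choose_right {m s t : ℕ} (hst : s ≤ t) (ht : 2 * t ≤ m) :
    m.choose s ≤ m.choose t := by
  induction t, hst using Nat.le_induction with
  | base => rfl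
  | succ t _ ih => exact (ih (by omega)).trans (choose_le_succ_of_lt_half_left (by omega))

lemma mul_choose_le_choose_succ {m s K : ℕ} (h : K * (s + 1) + s ≤ m) :
    K * m.choose s ≤ m.choose (s + 1) := by
  refine Nat.le_of_mul_le_mul_right ?_ s.succ_pos
  calc K * m.choose s * (s + 1) = m.choose s * (K * (s + 1)) := by ring
    _ ≤ m.choose s * (m - s) := Nat.mul_le_mul_left _ (by omega)
    _ = m.choose (s + 1) * (s + 1) := (choose_succ_right_eq m s).symm

lemma sum_range_choose_add_choose (M k : ℕ) {t : ℕ} (ht : t ≤ M) :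
    ∑ l ∈ Finset.range t, (M - 1 - l).choose k + (M - t).choose (k + 1) = M.choose (k + 1) := by
  induction t with
  | zero => simp
  | succ t ih =>
    have hpascal :
        (M - t).choose (k + 1) = (M - 1 - t).choose k + (M - (t + 1)).choose (k + 1) := by
      rw [show M - t = M - 1 - t + 1 by omega, choose_succ_succ',
        show M - 1 - t = M - (t + 1) by omega]
    rw [Finset.sum_range_succ, ← ih (by omega), hpascal]
    ring

end Nat

/-- On `m` points this is `#A + #B` for `A` the `a`-sets meeting a fixed `w`-set and `B` the
`b`-sets containing it. -/
def crossBound (m a b w : ℕ) : ℕ :=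
  ∑ l ∈ range w, (m - 1 - l).choose (a - 1) + (m - w).choose (b - w)

lemma crossBound_zero (m a b : ℕ) : crossBound m a b 0 = m.choose b := by
  simp [crossBound]

lemma crossBound_succ (m a b w : ℕ) :
    crossBound m a b (w + 1) = (m - 1).choose (a - 1) + crossBound (m - 1) a (b - 1) w := by
  have hshift : ∀ l, m - 1 - (l + 1) = m - 2 - l := fun l => by omega
  simp only [crossBound, sum_range_succ', hshift, Nat.sub_zero, Nat.sub_sub _ 1 w, Nat.add_comm 1 w]
  ring

lemma crossBound_add_choose {m a b w : ℕ} (ha : 1 ≤ a) (hw : w ≤ m) :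
    crossBound m a b w + (m - w).choose a = m.choose a + (m - w).choose (b - w) := by
  obtain ⟨k, rfl⟩ : ∃ k, a = k + 1 := ⟨a - 1, by omega⟩
  rw [crossBound, ← Nat.sum_range_choose_add_choose m k hw, Nat.add_sub_cancel]
  ring

lemma choose_add_crossBound_add_choose {m r u : ℕ} (hr : 2 ≤ r) (hu : 1 ≤ u)
    (hm : u + 1 ≤ m) :
    (m - 2).choose (r - 2) + crossBound (m - 2) (r - 1) (r - 1) (u - 1) + (m - u - 1).choose (r - 1)
      = (m - 1).choose (r - 1) + (m - u - 1).choose (r - u) := by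
  have hstep := crossBound_succ (m - 1) (r - 1) r (u - 1)
  have hid := crossBound_add_choose (m := m - 1) (b := r) (w := u) (a := r - 1) (by omega)
    (by omega)
  rw [show u - 1 + 1 = u by omega, show m - 1 - 1 = m - 2 by omega,
    show r - 1 - 1 = r - 2 by omega] at hstep
  rw [show m - 1 - u = m - u - 1 by omega] at hid
  omega

lemma choose_le_crossBound_succ (m a b w : ℕ) :
    (m - 1).choose (a - 1) ≤ crossBound m a b (w + 1) := by
  rw [crossBound_succ]
  exact Nat.le_add_right _ _

lemma choose_le_crossBound {m a b w : ℕ} (hwb : w ≤ b) (hba : b < a) (hm : 2 * a + w ≤ m) :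
    m.choose b ≤ crossBound m a b w := by
  induction w generalizing m b with
  | zero => rw [crossBound_zero]
  | succ w ih =>
    obtain ⟨m, rfl⟩ : ∃ m', m = m' + 1 := ⟨m - 1, by omega⟩
    obtain ⟨b, rfl⟩ : ∃ b', b = b' + 1 := ⟨b - 1, by omega⟩
    rw [crossBound_succ, Nat.choose_succ_succ', add_comm]
    simp only [Nat.add_sub_cancel]
    exact add_le_add (Nat.choose_le_choose_right (by omega) (by omega))
      (ih (by omega) (by omega) (by omega))

section Families

variable {α : Type*} [DecidableEq α]

def CrossIntersecting (A B : Finset (Finset α)) : Prop :=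
  ∀ S ∈ A, ∀ T ∈ B, (S ∩ T).Nonempty

namespace CrossIntersecting

variable {A A' B B' : Finset (Finset α)}

lemma symm (h : CrossIntersecting A B) : CrossIntersecting B A :=
  fun T hT S hS => inter_comm S T ▸ h S hS T hT

lemma mono (h : CrossIntersecting A B) (hA : A' ⊆ A) (hB : B' ⊆ B) : CrossIntersecting A' B' :=
  fun S hS T hT => h S (hA hS) T (hB hT)

lemma image_erase_left (h : CrossIntersecting A B) {z : α} (hz : ∀ T ∈ B, z ∉ T) :
    CrossIntersecting (A.image (·.erase z)) B := by
  rintro _ hS' T hT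
  obtain ⟨S, hS, rfl⟩ := mem_image.1 hS'
  obtain ⟨v, hv⟩ := h S hS T hT
  obtain ⟨hvS, hvT⟩ := mem_inter.1 hv
  exact ⟨v, mem_inter.2 ⟨mem_erase.2 ⟨fun hvz => hz T hT (hvz ▸ hvT), hvS⟩, hvT⟩⟩

end CrossIntersecting

variable {A B : Finset (Finset α)} {X Y : Finset α} {k : ℕ}

lemma card_le_choose_of_forall_subset (hA : A ⊆ powersetCard k X) (hY : ∀ S ∈ A, Y ⊆ S) :
    #A ≤ (#X - #Y).choose (k - #Y) := by
  rcases A.eq_empty_or_nonempty with rfl | ⟨S₀, hS₀⟩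
  · simp
  have hYX : Y ⊆ X := (hY S₀ hS₀).trans (mem_powersetCard.1 (hA hS₀)).1
  calc #A ≤ #(powersetCard (k - #Y) (X \ Y)) := by
        refine card_le_card_of_injOn (· \ Y) (fun S hS => ?_) (fun S hS T hT hST => ?_)
        · obtain ⟨hSX, hSk⟩ := mem_powersetCard.1 (hA hS)
          exact mem_powersetCard.2 ⟨sdiff_subset_sdiff hSX le_rfl,
            by rw [card_sdiff_of_subset (hY S hS), hSk]⟩
        · rw [← sdiff_union_of_subset (hY S hS), ← sdiff_union_of_subset (hY T hT)]
          exact congrArg (· ∪ Y) hST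
    _ = (#X - #Y).choose (k - #Y) := by rw [card_powersetCard, card_sdiff_of_subset hYX]

lemma card_le_choose_of_forall_mem (hA : A ⊆ powersetCard k X) {z : α}
    (hz : ∀ S ∈ A, z ∈ S) : #A ≤ (#X - 1).choose (k - 1) := by
  simpa using card_le_choose_of_forall_subset (Y := {z}) hA
    (fun S hS => singleton_subset_iff.2 (hz S hS))

lemma card_le_choose_of_forall_mem_pair (hA : A ⊆ powersetCard k X) {x y : α} (hxy : x ≠ y)
    (hxy_mem : ∀ S ∈ A, x ∈ S ∧ y ∈ S) : #A ≤ (#X - 2).choose (k - 2) := by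
  simpa [card_pair hxy] using card_le_choose_of_forall_subset (Y := {x, y}) hA
    (fun S hS => insert_subset (hxy_mem S hS).1 (singleton_subset_iff.2 (hxy_mem S hS).2))

lemma card_image_erase_of_forall_mem {z : α} (hz : ∀ S ∈ A, z ∈ S) :
    #(A.image (·.erase z)) = #A :=
  card_image_of_injOn ((erase_injOn' z).mono hz)

lemma image_erase_subset_powersetCard (hA : A ⊆ powersetCard k X) {z : α}
    (hz : ∀ S ∈ A, z ∈ S) : A.image (·.erase z) ⊆ powersetCard (k - 1) (X.erase z) := by
  intro _ hS'
  obtain ⟨S, hS, rfl⟩ := mem_image.1 hS'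
  obtain ⟨hSX, hSk⟩ := mem_powersetCard.1 (hA hS)
  exact mem_powersetCard.2 ⟨erase_subset_erase z hSX, by rw [card_erase_of_mem (hz S hS), hSk]⟩

lemma subset_powersetCard_erase (hA : A ⊆ powersetCard k X) {z : α} (hz : ∀ S ∈ A, z ∉ S) :
    A ⊆ powersetCard k (X.erase z) := fun S hS =>
  have ⟨hSX, hSk⟩ := mem_powersetCard.1 (hA hS)
  mem_powersetCard.2
    ⟨fun _ hv => mem_erase.2 ⟨fun hvz => hz S hS (hvz ▸ hv), hSX hv⟩, hSk⟩

lemma card_filter_and_add_card_filter_and_not {β : Type*} (s : Finset β) (p q : β → Prop)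
    [DecidablePred p] [DecidablePred q] :
    #{b ∈ s | p b ∧ q b} + #{b ∈ s | p b ∧ ¬q b} = #{b ∈ s | p b} := by
  rw [← card_filter_add_card_filter_not (s := {b ∈ s | p b}) q, filter_filter, filter_filter]

lemma card_le_sum_card_filter_mem {T : Finset α} (h : ∀ S ∈ A, (S ∩ T).Nonempty) :
    #A ≤ ∑ z ∈ T, #{S ∈ A | z ∈ S} :=
  calc #A ≤ #(T.biUnion fun z => {S ∈ A | z ∈ S}) := card_le_card fun S hS => by
        obtain ⟨z, hz⟩ := h S hS
        exact mem_biUnion.2 ⟨z, (mem_inter.1 hz).2, mem_filter.2 ⟨hS, (mem_inter.1 hz).1⟩⟩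
    _ ≤ ∑ z ∈ T, #{S ∈ A | z ∈ S} := card_biUnion_le

lemma eq_empty_of_crossIntersecting_powersetCard {a b : ℕ} (hA : A ⊆ powersetCard a X)
    (hAB : CrossIntersecting A (powersetCard b X)) (hX : a + b ≤ #X) : A = ∅ := by
  refine eq_empty_of_forall_notMem fun S hS => ?_
  obtain ⟨hSX, hSa⟩ := mem_powersetCard.1 (hA hS)
  obtain ⟨T, hT, hTb⟩ := exists_subset_card_eq (show b ≤ #(X \ S) by
    rw [card_sdiff_of_subset hSX]; omega)
  obtain ⟨v, hv⟩ := hAB S hS T (mem_powersetCard.2 ⟨hT.trans sdiff_subset, hTb⟩)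
  exact (mem_sdiff.1 (hT (mem_inter.1 hv).2)).2 (mem_inter.1 hv).1

lemma card_le_mul_choose_of_forall_exists_not_mem [Nonempty α] {a b : ℕ}
    (hA : A ⊆ powersetCard a X) (hB : ∀ T ∈ B, #T ≤ b) (hAB : CrossIntersecting A B)
    (hB_free : ∀ z, ∃ T ∈ B, z ∉ T) :
    #A ≤ b * b * (#X - 2).choose (a - 2) := by
  obtain ⟨T₀, hT₀, -⟩ := hB_free (Classical.arbitrary α)
  choose g hgB hg using hB_free
  have hstar : ∀ z, #{S ∈ A | z ∈ S} ≤ b * (#X - 2).choose (a - 2) := fun z =>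
    calc #{S ∈ A | z ∈ S} ≤ ∑ y ∈ g z, #{S ∈ {S ∈ A | z ∈ S} | y ∈ S} :=
          card_le_sum_card_filter_mem fun S hS => hAB S (mem_filter.1 hS).1 _ (hgB z)
      _ ≤ ∑ y ∈ g z, (#X - 2).choose (a - 2) := sum_le_sum fun y hy =>
          card_le_choose_of_forall_mem_pair
            ((filter_subset _ _).trans ((filter_subset _ _).trans hA))
            (ne_of_mem_of_not_mem hy (hg z)).symm
            fun S hS => ⟨(mem_filter.1 (mem_filter.1 hS).1).2, (mem_filter.1 hS).2⟩
      _ ≤ b * (#X - 2).choose (a - 2) := by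
          rw [sum_const, smul_eq_mul]
          exact Nat.mul_le_mul_right _ (hB _ (hgB z))
  calc #A ≤ ∑ z ∈ T₀, #{S ∈ A | z ∈ S} :=
        card_le_sum_card_filter_mem fun S hS => hAB S hS T₀ hT₀
    _ ≤ ∑ z ∈ T₀, b * (#X - 2).choose (a - 2) := sum_le_sum fun z _ => hstar z
    _ ≤ b * b * (#X - 2).choose (a - 2) := by
        rw [sum_const, smul_eq_mul, mul_assoc]
        exact Nat.mul_le_mul_right _ (hB T₀ hT₀)

end Families

section CrossBound

variable {α : Type*} [DecidableEq α] [Nonempty α] {a b : ℕ} {X : Finset α}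
  {A B : Finset (Finset α)}

lemma card_add_card_le_choose_of_forall_exists_not_mem (ha : 2 ≤ a) (hba : b ≤ a)
    (hX : 2 * a ^ 3 ≤ #X) (hA : A ⊆ powersetCard a X) (hB : B ⊆ powersetCard b X)
    (hAB : CrossIntersecting A B) (hcap : b = a → #B ≤ #A) (hA_ne : A.Nonempty)
    (hB_free : ∀ z, ∃ T ∈ B, z ∉ T) :
    #A + #B ≤ (#X - 1).choose (a - 1) := by
  obtain ⟨c, rfl⟩ : ∃ c, a = c + 2 := ⟨a - 2, by omega⟩
  have hXc : 2 * (c + 2) * (c + 2) * (c + 1) + c ≤ #X - 1 := by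
    have : 2 * (c + 2) * (c + 2) * (c + 1) + c + 1 ≤ 2 * (c + 2) ^ 3 := by nlinarith
    omega
  set M := (#X - 1).choose c
  have hA_le : #A ≤ (c + 2) * (c + 2) * M :=
    (card_le_mul_choose_of_forall_exists_not_mem hA
      (fun T hT => (mem_powersetCard.1 (hB hT)).2.le) hAB hB_free).trans
      (Nat.mul_le_mul (Nat.mul_le_mul hba hba) (Nat.choose_le_choose _ (by omega)))
  have hB_le : #B ≤ (c + 2) * (c + 2) * M := by
    rcases hba.lt_or_eq with hlt | rfl
    · obtain ⟨S, hS⟩ := hA_ne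
      calc #B ≤ ∑ z ∈ S, #{T ∈ B | z ∈ T} :=
            card_le_sum_card_filter_mem fun T hT => hAB.symm T hT S hS
        _ ≤ ∑ z ∈ S, (#X - 1).choose (b - 1) := sum_le_sum fun z _ =>
            card_le_choose_of_forall_mem ((filter_subset _ _).trans hB)
              fun T hT => (mem_filter.1 hT).2
        _ = (c + 2) * (#X - 1).choose (b - 1) := by
            rw [sum_const, smul_eq_mul, (mem_powersetCard.1 (hA hS)).2]
        _ ≤ (c + 2) * (c + 2) * M := by
            rw [mul_assoc]
            refine Nat.mul_le_mul_left _ ((Nat.choose_le_choose_right (by omega) ?_).trans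
              (Nat.le_mul_of_pos_left _ (by omega)))
            nlinarith
    · exact (hcap rfl).trans hA_le
  calc #A + #B ≤ (2 * (c + 2) * (c + 2)) * M := by linarith
    _ ≤ (#X - 1).choose (c + 1) := Nat.mul_choose_le_choose_succ hXc

theorem card_add_card_le_crossBound (ha : 2 ≤ a) {w : ℕ} (hwb : w ≤ b) (hba : b ≤ a)
    (hX : 2 * a ^ 3 + w ≤ #X) (hA : A ⊆ powersetCard a X) (hB : B ⊆ powersetCard b X)
    (hAB : CrossIntersecting A B) (hcap : b = a → #B ≤ #A)
    (hthr : (#X - w).choose (b - w) ≤ #B) :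
    #A + #B ≤ crossBound #X a b w := by
  have ha3 : a ≤ a ^ 3 := Nat.le_self_pow (by norm_num) a
  induction w generalizing b X A B with
  | zero =>
    rw [Nat.sub_zero, Nat.sub_zero, ← card_powersetCard] at hthr
    obtain rfl : B = powersetCard b X := eq_of_subset_of_card_le hB hthr
    rw [eq_empty_of_crossIntersecting_powersetCard hA hAB (by omega), crossBound_zero,
      card_powersetCard, card_empty, zero_add]
  | succ w ih =>
    by_cases hstar : ∃ z, ∀ T ∈ B, z ∈ T
    · obtain ⟨z, hz⟩ := hstar
      obtain ⟨T₀, hT₀⟩ : B.Nonempty :=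
        card_pos.1 ((Nat.choose_pos (by omega)).trans_le hthr)
      have hXz : #(X.erase z) = #X - 1 :=
        card_erase_of_mem ((mem_powersetCard.1 (hB hT₀)).1 (hz T₀ hT₀))
      have hA₁ : #{S ∈ A | z ∈ S} ≤ (#X - 1).choose (a - 1) :=
        card_le_choose_of_forall_mem ((filter_subset _ _).trans hA) fun S hS => (mem_filter.1 hS).2
      have hA₂B : #{S ∈ A | z ∉ S} + #B ≤ crossBound (#X - 1) a (b - 1) w := by
        rw [← card_image_erase_of_forall_mem hz, ← hXz]
        refine ih (by omega) (by omega) (by omega)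
          (subset_powersetCard_erase ((filter_subset _ _).trans hA) fun S hS => (mem_filter.1 hS).2)
          (image_erase_subset_powersetCard hB hz) ?_ (fun h => absurd h (by omega)) ?_
        · exact ((hAB.mono (filter_subset _ _) subset_rfl).symm.image_erase_left
            fun S hS => (mem_filter.1 hS).2).symm
        · rwa [card_image_erase_of_forall_mem hz, hXz, show #X - 1 - w = #X - (w + 1) by omega,
            show b - 1 - w = b - (w + 1) by omega]
      rw [crossBound_succ, ← card_filter_add_card_filter_not (fun S => z ∈ S)]
      omega
    · push Not at hstar
      rcases A.eq_empty_or_nonempty with rfl | hA_ne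
      · rcases hba.lt_or_eq with hlt | rfl
        · calc #(∅ : Finset (Finset α)) + #B ≤ (#X).choose b := by
                simpa using card_le_card hB
            _ ≤ crossBound #X a b (w + 1) := choose_le_crossBound hwb hlt (by omega)
        · simp [card_eq_zero.1 (Nat.le_zero.1 (hcap rfl))]
      · exact (card_add_card_le_choose_of_forall_exists_not_mem ha hba (by omega) hA hB hAB hcap
          hA_ne hstar).trans (choose_le_crossBound_succ _ _ _ _)

lemma card_add_card_le_crossBound_of_links {Q D : Finset (Finset α)} {r u : ℕ} {x y : α}
    (hr : 3 ≤ r) (hu : 1 ≤ u) (hur : u ≤ r) (hX : 2 * (r - 1) ^ 3 + r ≤ #X - 2)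
    (hQ : Q ⊆ powersetCard r X) (hD : D ⊆ powersetCard r X) (hQD : CrossIntersecting Q D)
    (hxyQ : ∀ S ∈ Q, x ∈ S ∧ y ∉ S) (hxyD : ∀ T ∈ D, y ∈ T ∧ x ∉ T)
    (hDQ : #D ≤ #Q) (hthr : (#X - u - 1).choose (r - u) ≤ #D) :
    #Q + #D ≤ crossBound (#X - 2) (r - 1) (r - 1) (u - 1) := by
  obtain ⟨T₀, hT₀⟩ : D.Nonempty := card_pos.1 ((Nat.choose_pos (by omega)).trans_le hthr)
  obtain ⟨S₀, hS₀⟩ : Q.Nonempty := card_pos.1 ((card_pos.2 ⟨T₀, hT₀⟩).trans_le hDQ)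
  have hxQ : ∀ S ∈ Q, x ∈ S := fun S hS => (hxyQ S hS).1
  have hyD : ∀ T ∈ D, y ∈ T := fun T hT => (hxyD T hT).1
  have hxy : x ≠ y := ne_of_mem_of_not_mem (hxQ S₀ hS₀) (hxyQ S₀ hS₀).2
  have hXxy : #((X.erase x).erase y) = #X - 2 := by
    rw [card_erase_of_mem
        (mem_erase.2 ⟨hxy.symm, (mem_powersetCard.1 (hD hT₀)).1 (hyD T₀ hT₀)⟩),
      card_erase_of_mem ((mem_powersetCard.1 (hQ hS₀)).1 (hxQ S₀ hS₀))]
    omega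
  have hQ_sub : Q.image (·.erase x) ⊆ powersetCard (r - 1) ((X.erase x).erase y) := by
    rw [erase_right_comm]
    exact image_erase_subset_powersetCard
      (subset_powersetCard_erase hQ fun S hS => (hxyQ S hS).2) hxQ
  have hD_sub : D.image (·.erase y) ⊆ powersetCard (r - 1) ((X.erase x).erase y) :=
    image_erase_subset_powersetCard (subset_powersetCard_erase hD fun T hT => (hxyD T hT).2) hyD
  have hQD_erase : CrossIntersecting (Q.image (·.erase x)) (D.image (·.erase y)) := by
    refine ((hQD.image_erase_left fun T hT => (hxyD T hT).2).symm.image_erase_left ?_).symm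
    simp only [mem_image]
    rintro _ ⟨S, hS, rfl⟩ hyS
    exact (hxyQ S hS).2 (mem_of_mem_erase hyS)
  rw [← card_image_erase_of_forall_mem hxQ, ← card_image_erase_of_forall_mem hyD, ← hXxy]
  refine card_add_card_le_crossBound (by omega) (by omega) le_rfl (by rw [hXxy]; omega) hQ_sub
    hD_sub hQD_erase (fun _ => by rwa [card_image_erase_of_forall_mem hxQ,
      card_image_erase_of_forall_mem hyD]) ?_
  rwa [hXxy, card_image_erase_of_forall_mem hyD, show #X - 2 - (u - 1) = #X - u - 1 by omega,
    show r - 1 - (u - 1) = r - u by omega]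

end CrossBound

section Diversity

variable {X : Finset ℕ} {F : Finset (Finset ℕ)} {r x : ℕ}

lemma card_filter_mem_le_maxDeg (F : Finset (Finset ℕ)) (z : ℕ) :
    #{E ∈ F | z ∈ E} ≤ maxDeg F := by
  by_cases hz : z ∈ F.biUnion id
  · exact le_sup (f := fun x => #{E ∈ F | x ∈ E}) hz
  · have hF_z : {E ∈ F | z ∈ E} = ∅ :=
      filter_eq_empty_iff.2 fun E hE hzE => hz (mem_biUnion.2 ⟨E, hE, hzE⟩)
    simp [hF_z]

lemma exists_card_filter_mem_eq_maxDeg (F : Finset (Finset ℕ)) :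
    ∃ x, #{E ∈ F | x ∈ E} = maxDeg F := by
  rcases (F.biUnion id).eq_empty_or_nonempty with h | h
  · exact ⟨0, le_antisymm (card_filter_mem_le_maxDeg F 0) (by simp [maxDeg, h])⟩
  · obtain ⟨x, -, hx⟩ := exists_mem_eq_sup _ h fun x => #{E ∈ F | x ∈ E}
    exact ⟨x, hx.symm⟩

lemma card_filter_notMem_le_of_forall_mem (hx : #{E ∈ F | x ∈ E} = maxDeg F) {y : ℕ}
    (hy : ∀ T ∈ {E ∈ F | x ∉ E}, y ∈ T) :
    #{E ∈ F | x ∉ E} ≤ #{E ∈ F | x ∈ E ∧ y ∉ E} := by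
  have hsplit := card_filter_and_add_card_filter_and_not F (x ∈ ·) (y ∈ ·)
  have hdeg_y :
      #{E ∈ F | x ∈ E ∧ y ∈ E} + #{E ∈ F | x ∉ E} ≤ #{E ∈ F | y ∈ E} := by
    rw [← card_union_of_disjoint (disjoint_filter.2 fun E _ h h' => h' h.1)]
    refine card_le_card fun E hE => ?_
    simp only [mem_union, mem_filter] at hE ⊢
    rcases hE with h | h
    exacts [⟨h.1, h.2.2⟩, ⟨h.1, hy E (mem_filter.2 h)⟩]
  have := card_filter_mem_le_maxDeg F y
  omega

lemma card_add_choose_le_of_exists_forall_mem {u y : ℕ} (hr : 3 ≤ r) (hu : 1 ≤ u)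
    (hur : u ≤ r) (hX : r ^ 4 ≤ #X) (hF : F ⊆ powersetCard r X) (hint : FamIntersecting F)
    (hx : #{E ∈ F | x ∈ E} = maxDeg F) (hy : ∀ T ∈ {E ∈ F | x ∉ E}, y ∈ T)
    (hD : (#X - u - 1).choose (r - u) ≤ #{E ∈ F | x ∉ E}) :
    #F + (#X - u - 1).choose (r - 1) ≤ (#X - 1).choose (r - 1) + (#X - u - 1).choose (r - u) := by
  have hXr : 2 * (r - 1) ^ 3 + r ≤ #X - 2 := by
    obtain ⟨c, rfl⟩ : ∃ c, r = c + 3 := ⟨r - 3, by omega⟩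
    have : 2 * (c + 2) ^ 3 + c + 5 ≤ (c + 3) ^ 4 := by ring_nf; omega
    rw [show c + 3 - 1 = c + 2 by omega]
    omega
  have hsplit := card_filter_and_add_card_filter_and_not F (x ∈ ·) (y ∈ ·)
  have hsplit_x := card_filter_add_card_filter_not (s := F) (x ∈ ·)
  obtain ⟨T₀, hT₀⟩ : {E ∈ F | x ∉ E}.Nonempty :=
    card_pos.1 ((Nat.choose_pos (by omega)).trans_le hD)
  have hxy : x ≠ y := (ne_of_mem_of_not_mem (hy T₀ hT₀) (mem_filter.1 hT₀).2).symm
  have hP : #{E ∈ F | x ∈ E ∧ y ∈ E} ≤ (#X - 2).choose (r - 2) :=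
    card_le_choose_of_forall_mem_pair ((filter_subset _ _).trans hF) hxy
      fun S hS => (mem_filter.1 hS).2
  have hQD := card_add_card_le_crossBound_of_links hr hu hur hXr ((filter_subset _ _).trans hF)
    ((filter_subset _ _).trans hF)
    (CrossIntersecting.mono hint (filter_subset _ _) (filter_subset _ _))
    (fun S hS => (mem_filter.1 hS).2) (fun T hT => ⟨hy T hT, (mem_filter.1 hT).2⟩)
    (card_filter_notMem_le_of_forall_mem hx hy) hD
  have hid := choose_add_crossBound_add_choose (m := #X) (r := r) (u := u) (by omega) hu (by omega)
  omega

lemma card_le_choose_of_forall_exists_not_mem (hr : 3 ≤ r) (hX : r ^ 4 ≤ #X)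
    (hF : F ⊆ powersetCard r X) (hint : FamIntersecting F) (hx : #{E ∈ F | x ∈ E} = maxDeg F)
    (hD : ∀ y, ∃ T ∈ {E ∈ F | x ∉ E}, y ∉ T) : #F ≤ (#X - 2).choose (r - 2) := by
  have hxF : ∀ S ∈ {E ∈ F | x ∈ E}, x ∈ S := fun S hS => (mem_filter.1 hS).2
  have hdeg : maxDeg F ≤ r * r * (#X - 2).choose (r - 3) := by
    rw [← hx, ← card_image_erase_of_forall_mem hxF, show r - 3 = r - 1 - 2 by omega]
    exact card_le_mul_choose_of_forall_exists_not_mem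
      ((image_erase_subset_powersetCard ((filter_subset _ _).trans hF) hxF).trans
        (powersetCard_mono (erase_subset _ _)))
      (fun T hT => (mem_powersetCard.1 (hF (mem_filter.1 hT).1)).2.le)
      ((CrossIntersecting.mono hint (filter_subset _ _) (filter_subset _ _)).image_erase_left
        fun T hT => (mem_filter.1 hT).2) hD
  obtain ⟨T₀, hT₀, -⟩ := hD 0
  have hD_le : #{E ∈ F | x ∉ E} ≤ r * maxDeg F :=
    calc #{E ∈ F | x ∉ E} ≤ ∑ z ∈ T₀, #{T ∈ {E ∈ F | x ∉ E} | z ∈ T} :=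
          card_le_sum_card_filter_mem fun T hT =>
            hint T (mem_filter.1 hT).1 T₀ (mem_filter.1 hT₀).1
      _ ≤ ∑ z ∈ T₀, maxDeg F := sum_le_sum fun z _ =>
          (card_le_card (filter_subset_filter _ (filter_subset _ _))).trans
            (card_filter_mem_le_maxDeg F z)
      _ = r * maxDeg F := by
          rw [sum_const, smul_eq_mul, (mem_powersetCard.1 (hF (mem_filter.1 hT₀).1)).2]
  have hK : (1 + r) * (r * r) * (#X - 2).choose (r - 3) ≤ (#X - 2).choose (r - 2) := by
    rw [show r - 2 = r - 3 + 1 by omega]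
    refine Nat.mul_choose_le_choose_succ ?_
    obtain ⟨c, rfl⟩ : ∃ c, r = c + 3 := ⟨r - 3, by omega⟩
    have : (1 + (c + 3)) * ((c + 3) * (c + 3)) * (c + 1) + c + 2 ≤ (c + 3) ^ 4 := by nlinarith
    rw [Nat.add_sub_cancel]
    omega
  calc #F = maxDeg F + #{E ∈ F | x ∉ E} := by rw [← hx, card_filter_add_card_filter_not]
    _ ≤ (1 + r) * maxDeg F := by linarith
    _ ≤ (1 + r) * (r * r * (#X - 2).choose (r - 3)) := Nat.mul_le_mul_left _ hdeg
    _ ≤ (#X - 2).choose (r - 2) := by rw [← mul_assoc]; exact hK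

end Diversity

theorem stmt17 (r u : ℕ) (hu1 : 3 ≤ u) (hu2 : u ≤ r) :
    ∃ N : ℕ, ∀ n ≥ N, ∀ F ⊆ (Finset.range n).powersetCard r, FamIntersecting F →
      Nat.choose (n - 1) (r - 1) + Nat.choose (n - u - 1) (r - u)
        < F.card + Nat.choose (n - u - 1) (r - 1) →
      F.card - maxDeg F < Nat.choose (n - u - 1) (r - u) := by
  refine ⟨r ^ 4, fun n hn F hF hint hcard => ?_⟩
  obtain ⟨x, hx⟩ := exists_card_filter_mem_eq_maxDeg F
  have hsplit := card_filter_add_card_filter_not (s := F) (x ∈ ·)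
  have hXn : r ^ 4 ≤ #(range n) := (card_range n).symm ▸ hn
  have hrn : r ≤ n := (Nat.le_self_pow (by norm_num) r).trans hn
  by_contra! hdiv
  by_cases hstar : ∃ y, ∀ T ∈ {E ∈ F | x ∉ E}, y ∈ T
  · obtain ⟨y, hy⟩ := hstar
    have hF_le := card_add_choose_le_of_exists_forall_mem (by omega) (by omega) hu2 hXn hF hint hx
      hy (by rw [card_range]; omega)
    rw [card_range] at hF_le
    omega
  · push Not at hstar
    have hF_le := card_le_choose_of_forall_exists_not_mem (by omega) hXn hF hint hx hstar
    rw [card_range] at hF_le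
    have hpascal : (n - 1).choose (r - 1) = (n - 2).choose (r - 2) + (n - 2).choose (r - 1) := by
      rw [show n - 1 = n - 2 + 1 by omega, show r - 1 = r - 2 + 1 by omega, Nat.choose_succ_succ']
    have hmono : (n - u - 1).choose (r - 1) ≤ (n - 2).choose (r - 1) :=
      Nat.choose_le_choose _ (by omega)
    omega
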